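/- Assume a₀ ≡ 1 and ρ₀ ≡ 1 on [0,h] and ρ₁ ≡ 1 on [h,1]. Then for every λ > 0 the fundamental system at λ is v₁(y) = cos(√λ·y), p₁(y) = −√λ·sin(√λ·y), v₂(y) = sin(√λ·y)/√λ, p₂(y) = cos(√λ·y), and F(λ) = 2·cos(√λ·h) − √λ·(1−h)·sin(√λ·h); consequently there exist θ ∈ [0,2π) and a nontrivial quasi-periodic solution (u,p) of the soft-inclusion equation with spectral parameter λ satisfying u(h) = e^{iθ}·u(0) and e^{−iθ}·p(h) − p(0) = λ·u(0)·(1−h) if and only if |2·cos(√λ·h) − √λ·(1−h)·sin(√λ·h)| ≤ 2. -/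

import Mathlib

/-!
With constant coefficients the system reads `u' = p`, `p' = -λ u`, so by uniqueness for linear
ODEs every solution is `(u y, p y) = R(y) (u 0, p 0)` with
`R(y) = [[cos (√λ y), sin (√λ y)/√λ], [-√λ sin (√λ y), cos (√λ y)]]`; this gives the fundamental
system and the value of `F`. The quasi-periodicity conditions say that `(u 0, p 0)` is an
eigenvector with eigenvalue `μ = e^{iθ}` of the monodromy matrix `[[1, 0], [-λ(1-h), 1]] R(h)`,
which has determinant `1` and trace `F(λ)`. Hence they are solvable iff `μ² - F μ + 1 = 0`, that is
`F = μ + μ⁻¹ = 2 cos θ`, and such a `θ` exists iff `|F| ≤ 2`.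
-/

open Set Real

theorem exists_eigenvector_two_iff {K : Type*} [Field K] (a b c d μ : K) :
    (∃ x y : K, (x ≠ 0 ∨ y ≠ 0) ∧ a * x + b * y = μ * x ∧ c * x + d * y = μ * y) ↔
      μ ^ 2 - (a + d) * μ + (a * d - b * c) = 0 := by
  have key := Matrix.exists_mulVec_eq_zero_iff (M := !![a - μ, b; c, d - μ])
  simp only [Matrix.det_fin_two_of, funext_iff, Fin.forall_fin_two, Matrix.mulVec, dotProduct,
    Fin.sum_univ_two, Matrix.of_apply, Matrix.cons_val', Matrix.cons_val_zero,
    Matrix.cons_val_one, Matrix.cons_val_fin_one, Pi.zero_apply, ne_eq, not_and_or] at key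
  constructor
  · rintro ⟨x, y, hxy, h1, h2⟩
    have hdet := key.1 ⟨![x, y], by
      simpa using ⟨hxy, by linear_combination h1, by linear_combination h2⟩⟩
    linear_combination hdet
  · intro hchar
    obtain ⟨v, hv, h1, h2⟩ := key.2 (by linear_combination hchar)
    exact ⟨v 0, v 1, hv, by linear_combination h1, by linear_combination h2⟩

theorem exists_two_mul_cos_eq_iff (F : ℝ) : (∃ θ ∈ Ico 0 (2 * π), 2 * cos θ = F) ↔ |F| ≤ 2 := by
  constructor
  · rintro ⟨θ, -, rfl⟩
    rw [abs_mul, abs_two]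
    linarith [abs_cos_le_one θ]
  · intro hF
    rw [abs_le] at hF
    refine ⟨arccos (F / 2), ⟨arccos_nonneg _, (arccos_le_pi _).trans_lt (by linarith [pi_pos])⟩, ?_⟩
    rw [cos_arccos (by linarith) (by linarith)]
    ring

theorem Complex.exp_mul_I_sq_sub_mul_add_one_eq_zero_iff (θ F : ℝ) :
    exp (θ * I) ^ 2 - F * exp (θ * I) + 1 = 0 ↔ F = 2 * Real.cos θ := by
  have hinv : exp (θ * I) * exp (-θ * I) = 1 := by rw [← exp_add]; simp
  rw [← ofReal_inj]
  push_cast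
  rw [two_cos]
  constructor
  · intro h
    apply mul_left_cancel₀ (exp_ne_zero (θ * I))
    linear_combination -h - hinv
  · intro h
    linear_combination (-exp (θ * I)) * h - hinv

section Harmonic

variable {E : Type*} [NormedAddCommGroup E] [NormedSpace ℝ E] {s : ℝ}

noncomputable def harmonicU (s : ℝ) (A B : E) (y : ℝ) : E :=
  cos (s * y) • A + (sin (s * y) / s) • B

noncomputable def harmonicP (s : ℝ) (A B : E) (y : ℝ) : E :=
  -(s * sin (s * y)) • A + cos (s * y) • B

@[simp] lemma harmonicU_zero (A B : E) : harmonicU s A B 0 = A := by simp [harmonicU]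

@[simp] lemma harmonicP_zero (A B : E) : harmonicP s A B 0 = B := by simp [harmonicP]

lemma hasDerivAt_harmonicU (hs : s ≠ 0) (A B : E) (y : ℝ) :
    HasDerivAt (harmonicU s A B) (harmonicP s A B y) y := by
  have hlin := (hasDerivAt_id y).const_mul s
  refine ((hlin.cos.smul_const A).add ((hlin.sin.div_const s).smul_const B)).congr_deriv ?_
  simp only [harmonicP, id, mul_one]
  match_scalars <;> field_simp

lemma hasDerivAt_harmonicP (hs : s ≠ 0) (A B : E) (y : ℝ) :
    HasDerivAt (harmonicP s A B) (-(s ^ 2 • harmonicU s A B y)) y := by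
  have hlin := (hasDerivAt_id y).const_mul s
  refine (((hlin.sin.const_mul s).neg.smul_const A).add (hlin.cos.smul_const B)).congr_deriv ?_
  simp only [harmonicU, id, mul_one]
  match_scalars <;> field_simp

theorem eq_harmonic_of_hasDerivAt (hs : s ≠ 0) {u p : ℝ → E} {h : ℝ}
    (hu : ∀ y ∈ Icc 0 h, HasDerivAt u (p y) y)
    (hp : ∀ y ∈ Icc 0 h, HasDerivAt p (-(s ^ 2 • u y)) y) {y : ℝ} (hy : y ∈ Icc 0 h) :
    u y = harmonicU s (u 0) (p 0) y ∧ p y = harmonicP s (u 0) (p 0) y := by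
  let V : E × E →L[ℝ] E × E :=
    (ContinuousLinearMap.snd ℝ E E).prod (-(s ^ 2 • ContinuousLinearMap.fst ℝ E E))
  have hsol : ∀ {f g : ℝ → E}, (∀ y ∈ Icc 0 h, HasDerivAt f (g y) y) →
      (∀ y ∈ Icc 0 h, HasDerivAt g (-(s ^ 2 • f y)) y) →
      ∀ y ∈ Icc 0 h, HasDerivAt (fun t ↦ (f t, g t)) (V (f y, g y)) y :=
    fun hf hg y hy ↦ (hf y hy).prodMk (hg y hy)
  have hH := hsol (fun y _ ↦ hasDerivAt_harmonicU hs (u 0) (p 0) y)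
    (fun y _ ↦ hasDerivAt_harmonicP hs (u 0) (p 0) y)
  have huniq := ODE_solution_unique (v := fun _ ↦ V) (fun _ ↦ V.lipschitz)
    (HasDerivAt.continuousOn (hsol hu hp))
    (fun t ht ↦ (hsol hu hp t (Ico_subset_Icc_self ht)).hasDerivWithinAt)
    (HasDerivAt.continuousOn hH) (fun t ht ↦ (hH t (Ico_subset_Icc_self ht)).hasDerivWithinAt)
    (by simp) hy
  exact Prod.ext_iff.1 huniq

end Harmonic

theorem exists_quasiperiodic_harmonic_iff {s h L : ℝ} (hs : s ≠ 0) (hh : 0 ≤ h) {μ : ℂ}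
    (hμ : μ ≠ 0) :
    (∃ u p : ℝ → ℂ,
        (∀ y ∈ Icc 0 h, HasDerivAt u (p y) y) ∧
        (∀ y ∈ Icc 0 h, HasDerivAt p (-(s ^ 2 • u y)) y) ∧
        (∃ y ∈ Icc 0 h, u y ≠ 0 ∨ p y ≠ 0) ∧
        u h = μ * u 0 ∧ μ⁻¹ * p h - p 0 = L * u 0) ↔
      μ ^ 2 - ((2 * cos (s * h) - L / s * sin (s * h) : ℝ) : ℂ) * μ + 1 = 0 := by
  have hpyth : (sin (s * h) : ℂ) ^ 2 + (cos (s * h) : ℂ) ^ 2 = 1 := by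
    exact_mod_cast sin_sq_add_cos_sq (s * h)
  have hsC : (s : ℂ) ≠ 0 := by exact_mod_cast hs
  have hmonodromy : ∀ A B : ℂ,
      (harmonicU s A B h = μ * A ∧ μ⁻¹ * harmonicP s A B h - B = L * A) ↔
        (cos (s * h) * A + (sin (s * h) / s) * B = μ * A ∧
          (-(s * sin (s * h)) - L * cos (s * h)) * A + (cos (s * h) - L * sin (s * h) / s) * B =
            μ * B) := by
    intro A B
    simp only [harmonicU, harmonicP, Complex.real_smul, Complex.ofReal_div, Complex.ofReal_neg,
      Complex.ofReal_mul]
    refine and_congr_right fun h1 ↦ ?_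
    rw [sub_eq_iff_eq_add, inv_mul_eq_iff_eq_mul₀ hμ]
    constructor <;> intro h2
    · linear_combination h2 - L * h1
    · linear_combination h2 + L * h1
  have hchar : μ ^ 2 - ((2 * cos (s * h) - L / s * sin (s * h) : ℝ) : ℂ) * μ + 1 =
      μ ^ 2 - (cos (s * h) + (cos (s * h) - L * sin (s * h) / s)) * μ +
        (cos (s * h) * (cos (s * h) - L * sin (s * h) / s) -
          sin (s * h) / s * (-(s * sin (s * h)) - L * cos (s * h))) := by
    simp only [Complex.ofReal_sub, Complex.ofReal_mul, Complex.ofReal_div, Complex.ofReal_ofNat]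
    field_simp
    linear_combination (-s : ℂ) * hpyth
  rw [hchar, ← exists_eigenvector_two_iff]
  constructor
  · rintro ⟨u, p, hu, hp, ⟨y, hy, hne⟩, hqp⟩
    have hsol := fun y (hy : y ∈ Icc 0 h) ↦ eq_harmonic_of_hasDerivAt hs hu hp hy
    refine ⟨u 0, p 0, ?_, (hmonodromy _ _).1 ?_⟩
    · contrapose! hne
      simp [hsol y hy, hne, harmonicU, harmonicP]
    · rwa [(hsol h ⟨hh, le_rfl⟩).1, (hsol h ⟨hh, le_rfl⟩).2] at hqp
  · rintro ⟨A, B, hne, heig⟩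
    exact ⟨harmonicU s A B, harmonicP s A B, fun y _ ↦ hasDerivAt_harmonicU hs A B y,
      fun y _ ↦ hasDerivAt_harmonicP hs A B y, ⟨0, ⟨le_rfl, hh⟩, by simpa using hne⟩,
      by simpa using (hmonodromy A B).2 heig⟩

/-- In the homogeneous example `a₀ ≡ 1`, `ρ₀ ≡ 1` on `[0,h]`, `ρ₁ ≡ 1` on
`[h,1]`, the fundamental system at `λ > 0` is given by trigonometric functions, `F(λ) =
2cos(√λ h) − √λ (1−h) sin(√λ h)`, and a nontrivial quasi-periodic solution exists iff
`|2cos(√λ h) − √λ (1−h) sin(√λ h)| ≤ 2`. -/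
theorem homogeneous_example
    (h : ℝ) (hh0 : 0 < h) (hh1 : h < 1)
    (a₀ ρ₀ ρ₁ : ℝ → ℝ)
    (ha₀ : ∀ y ∈ Icc (0:ℝ) h, a₀ y = 1)
    (hρ₀ : ∀ y ∈ Icc (0:ℝ) h, ρ₀ y = 1)
    (hρ₁ : ∀ y ∈ Icc h (1:ℝ), ρ₁ y = 1)
    (lam : ℝ) (hlam : 0 < lam)
    (v₁ p₁ v₂ p₂ : ℝ → ℝ)
    (hv₁ : ∀ y ∈ Icc (0:ℝ) h, HasDerivAt v₁ (p₁ y / a₀ y) y)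
    (hp₁ : ∀ y ∈ Icc (0:ℝ) h, HasDerivAt p₁ (-(lam * ρ₀ y * v₁ y)) y)
    (hv₂ : ∀ y ∈ Icc (0:ℝ) h, HasDerivAt v₂ (p₂ y / a₀ y) y)
    (hp₂ : ∀ y ∈ Icc (0:ℝ) h, HasDerivAt p₂ (-(lam * ρ₀ y * v₂ y)) y)
    (hv₁0 : v₁ 0 = 1) (hp₁0 : p₁ 0 = 0) (hv₂0 : v₂ 0 = 0) (hp₂0 : p₂ 0 = 1) :
    (∀ y ∈ Icc (0:ℝ) h,
        v₁ y = Real.cos (Real.sqrt lam * y) ∧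
        p₁ y = -Real.sqrt lam * Real.sin (Real.sqrt lam * y) ∧
        v₂ y = Real.sin (Real.sqrt lam * y) / Real.sqrt lam ∧
        p₂ y = Real.cos (Real.sqrt lam * y)) ∧
    (v₁ h + p₂ h - lam * v₂ h * ∫ y in h..(1:ℝ), ρ₁ y
        = 2 * Real.cos (Real.sqrt lam * h)
          - Real.sqrt lam * (1 - h) * Real.sin (Real.sqrt lam * h)) ∧
    ((∃ θ ∈ Ico (0:ℝ) (2 * π), ∃ u p : ℝ → ℂ,
        (∀ y ∈ Icc (0:ℝ) h, HasDerivAt u (p y / (a₀ y : ℂ)) y) ∧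
        (∀ y ∈ Icc (0:ℝ) h, HasDerivAt p (-((lam : ℂ) * (ρ₀ y : ℂ) * u y)) y) ∧
        (∃ y ∈ Icc (0:ℝ) h, u y ≠ 0 ∨ p y ≠ 0) ∧
        u h = Complex.exp (θ * Complex.I) * u 0 ∧
        Complex.exp (-θ * Complex.I) * p h - p 0 = (lam : ℂ) * u 0 * ((1 - h : ℝ) : ℂ))
      ↔ |2 * Real.cos (Real.sqrt lam * h)
          - Real.sqrt lam * (1 - h) * Real.sin (Real.sqrt lam * h)| ≤ 2) := by
  obtain ⟨s, hs, rfl⟩ : ∃ s, 0 < s ∧ lam = s ^ 2 := ⟨√lam, sqrt_pos.2 hlam, (sq_sqrt hlam.le).symm⟩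
  simp only [sqrt_sq hs.le]
  have hreal : ∀ {v p : ℝ → ℝ}, (∀ y ∈ Icc 0 h, HasDerivAt v (p y / a₀ y) y) →
      (∀ y ∈ Icc 0 h, HasDerivAt p (-(s ^ 2 * ρ₀ y * v y)) y) →
      ∀ y ∈ Icc 0 h, v y = harmonicU s (v 0) (p 0) y ∧ p y = harmonicP s (v 0) (p 0) y :=
    fun hv hp y hy ↦ eq_harmonic_of_hasDerivAt hs.ne'
      (fun y hy ↦ by simpa [ha₀ y hy] using hv y hy)
      (fun y hy ↦ by simpa [hρ₀ y hy] using hp y hy) hy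
  have hfund : ∀ y ∈ Icc 0 h, v₁ y = cos (s * y) ∧ p₁ y = -s * sin (s * y) ∧
      v₂ y = sin (s * y) / s ∧ p₂ y = cos (s * y) := by
    intro y hy
    obtain ⟨e₁, e₂⟩ := hreal hv₁ hp₁ y hy
    obtain ⟨e₃, e₄⟩ := hreal hv₂ hp₂ y hy
    simp [e₁, e₂, e₃, e₄, hv₁0, hp₁0, hv₂0, hp₂0, harmonicU, harmonicP]
  have hint : ∫ y in h..1, ρ₁ y = 1 - h := by
    rw [intervalIntegral.integral_congr (g := fun _ ↦ 1)
      fun y hy ↦ hρ₁ y (by rwa [uIcc_of_le hh1.le] at hy)]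
    simp
  refine ⟨hfund, ?_, ?_⟩
  · obtain ⟨e₁, -, e₃, e₄⟩ := hfund h ⟨hh0.le, le_rfl⟩
    rw [e₁, e₃, e₄, hint]
    field_simp
    ring
  rw [← exists_two_mul_cos_eq_iff]
  refine exists_congr fun θ ↦ and_congr_right fun _ ↦ ?_
  have hL : s * (1 - h) = s ^ 2 * (1 - h) / s := by field_simp
  rw [eq_comm, ← Complex.exp_mul_I_sq_sub_mul_add_one_eq_zero_iff, hL,
    ← exists_quasiperiodic_harmonic_iff hs.ne' hh0.le (Complex.exp_ne_zero _)]
  refine exists₂_congr fun u p ↦ and_congr (forall₂_congr fun y hy ↦ by simp [ha₀ y hy]) <|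
    and_congr (forall₂_congr fun y hy ↦ by simp [hρ₀ y hy, Complex.real_smul]) <|
    and_congr_right' <| and_congr_right' ?_
  rw [neg_mul, Complex.exp_neg]
  push_cast
  ring_nf
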